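/- Let π be the bivector field on ℝ^6 given by π = −2x3 ∂x2∧∂x1 − 2x2 ∂x3∧∂x1 + 3(x1²−t1) ∂x3∧∂x2 (the cusp model). Then π is a Poisson bivector, i.e. it satisfies the Jacobi identity. -/

import Mathlib

/-- Partial derivative in the `i`-th coordinate direction on `ℝ⁶`. -/
noncomputable def pd (i : Fin 6) (g : (Fin 6 → ℝ) → ℝ) (p : Fin 6 → ℝ) : ℝ :=
  fderiv ℝ g p (Pi.single i 1)

section aux


lemma contDiff_pd {f : (Fin 6 → ℝ) → ℝ} (hf : ContDiff ℝ (⊤ : ℕ∞) f) (a : Fin 6) :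
    ContDiff ℝ (⊤ : ℕ∞) (pd a f) := by
  have h1 : ContDiff ℝ (⊤ : ℕ∞) (fderiv ℝ f) := hf.fderiv_right (by simp)
  exact (ContinuousLinearMap.apply ℝ ℝ (Pi.single a (1:ℝ))).contDiff.comp h1

lemma diff_pd {f : (Fin 6 → ℝ) → ℝ} (hf : ContDiff ℝ (⊤ : ℕ∞) f) (a : Fin 6) (p : Fin 6 → ℝ) :
    DifferentiableAt ℝ (pd a f) p :=
  ((contDiff_pd hf a).differentiable (by simp)) p

lemma pd_symm {f : (Fin 6 → ℝ) → ℝ} (hf : ContDiff ℝ (⊤ : ℕ∞) f) (a b : Fin 6) (p : Fin 6 → ℝ) :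
    pd a (pd b f) p = pd b (pd a f) p := by
  have hd : Differentiable ℝ f := hf.differentiable (by simp)
  have h1 : ContDiff ℝ (⊤ : ℕ∞) (fderiv ℝ f) := hf.fderiv_right (by simp)
  have hx : HasFDerivAt (fderiv ℝ f) (fderiv ℝ (fderiv ℝ f) p) p :=
    ((h1.differentiable (by simp)) p).hasFDerivAt
  have hsymm := second_derivative_symmetric (fun y => (hd y).hasFDerivAt) hx
    (Pi.single a 1) (Pi.single b 1)
  have key : ∀ c : Fin 6, pd c f = fun q =>
      (ContinuousLinearMap.apply ℝ ℝ (Pi.single c (1:ℝ))) (fderiv ℝ f q) := fun c => rfl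
  have hfd : ∀ c : Fin 6, fderiv ℝ (pd c f) p =
      (ContinuousLinearMap.apply ℝ ℝ (Pi.single c (1:ℝ))).comp (fderiv ℝ (fderiv ℝ f) p) := by
    intro c
    rw [key c]
    rw [show (fun q => (ContinuousLinearMap.apply ℝ ℝ (Pi.single c (1:ℝ))) (fderiv ℝ f q))
        = (ContinuousLinearMap.apply ℝ ℝ (Pi.single c (1:ℝ))) ∘ (fderiv ℝ f) from rfl]
    rw [fderiv_comp p (ContinuousLinearMap.apply ℝ ℝ (Pi.single c (1:ℝ))).differentiableAt
      ((h1.differentiable (by simp)) p)]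
    rw [ContinuousLinearMap.fderiv]
  simp only [pd, hfd, ContinuousLinearMap.coe_comp', Function.comp_apply,
    ContinuousLinearMap.apply_apply]
  exact hsymm

end aux

/-- Coordinates: `p 0, p 1, p 2` are `t1, t2, t3` and `p 3, p 4, p 5` are `x1, x2, x3`.
The cusp bivector `π = −2x3 ∂x2∧∂x1 − 2x2 ∂x3∧∂x1 + 3(x1²−t1) ∂x3∧∂x2`. -/
noncomputable def piv (p : Fin 6 → ℝ) : Fin 6 → Fin 6 → ℝ := fun i j =>
  if i = 4 ∧ j = 3 then -(2 * p 5)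
  else if i = 3 ∧ j = 4 then -(-(2 * p 5))
  else if i = 5 ∧ j = 3 then -(2 * p 4)
  else if i = 3 ∧ j = 5 then -(-(2 * p 4))
  else if i = 5 ∧ j = 4 then 3 * ((p 3) ^ 2 - p 0)
  else if i = 4 ∧ j = 5 then -(3 * ((p 3) ^ 2 - p 0))
  else 0

/-- The bracket `{g,h} = π(dg,dh)` induced by the bivector `π`. -/
noncomputable def bracket (g h : (Fin 6 → ℝ) → ℝ) (p : Fin 6 → ℝ) : ℝ :=
  ∑ i, ∑ j, piv p i j * pd i g p * pd j h p


lemma pd_add (j : Fin 6) {f g : (Fin 6 → ℝ) → ℝ} {p : Fin 6 → ℝ}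
    (hf : DifferentiableAt ℝ f p) (hg : DifferentiableAt ℝ g p) :
    pd j (fun q => f q + g q) p = pd j f p + pd j g p := by
  simp [pd, fderiv_fun_add hf hg]

lemma pd_sub (j : Fin 6) {f g : (Fin 6 → ℝ) → ℝ} {p : Fin 6 → ℝ}
    (hf : DifferentiableAt ℝ f p) (hg : DifferentiableAt ℝ g p) :
    pd j (fun q => f q - g q) p = pd j f p - pd j g p := by
  simp [pd, fderiv_fun_sub hf hg]

lemma pd_mul (j : Fin 6) {f g : (Fin 6 → ℝ) → ℝ} {p : Fin 6 → ℝ}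
    (hf : DifferentiableAt ℝ f p) (hg : DifferentiableAt ℝ g p) :
    pd j (fun q => f q * g q) p = pd j f p * g p + f p * pd j g p := by
  simp [pd, fderiv_fun_mul hf hg]; ring

lemma pd_const_mul (j : Fin 6) (c : ℝ) {f : (Fin 6 → ℝ) → ℝ} {p : Fin 6 → ℝ}
    (hf : DifferentiableAt ℝ f p) :
    pd j (fun q => c * f q) p = c * pd j f p := by
  simp [pd, fderiv_const_mul hf]

lemma diff_coord (i : Fin 6) (p : Fin 6 → ℝ) :
    DifferentiableAt ℝ (fun q : Fin 6 → ℝ => q i) p :=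
  (ContinuousLinearMap.proj i : (Fin 6 → ℝ) →L[ℝ] ℝ).differentiableAt

lemma pd_coord (j i : Fin 6) (p : Fin 6 → ℝ) :
    pd j (fun q : Fin 6 → ℝ => q i) p = (Pi.single j (1:ℝ) : Fin 6 → ℝ) i := by
  have : (fun q : Fin 6 → ℝ => q i) = (ContinuousLinearMap.proj i : (Fin 6 → ℝ) →L[ℝ] ℝ) := rfl
  simp [pd, this, ContinuousLinearMap.fderiv]

lemma bracket_eq (g h : (Fin 6 → ℝ) → ℝ) (p : Fin 6 → ℝ) : bracket g h p =
    -(2 * p 5) * (pd 4 g p * pd 3 h p - pd 3 g p * pd 4 h p)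
    + -(2 * p 4) * (pd 5 g p * pd 3 h p - pd 3 g p * pd 5 h p)
    + 3 * ((p 3) ^ 2 - p 0) * (pd 5 g p * pd 4 h p - pd 4 g p * pd 5 h p) := by
  simp [bracket, piv, Fin.sum_univ_six]
  ring

lemma pd_bracket (j : Fin 6) {h k : (Fin 6 → ℝ) → ℝ}
    (hh : ContDiff ℝ (⊤ : ℕ∞) h) (hk : ContDiff ℝ (⊤ : ℕ∞) k) (p : Fin 6 → ℝ) :
    pd j (bracket h k) p =
      -(2 * (Pi.single j (1:ℝ) : Fin 6 → ℝ) 5) * (pd 4 h p * pd 3 k p - pd 3 h p * pd 4 k p)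
      + -(2 * p 5) * ((pd j (pd 4 h) p * pd 3 k p + pd 4 h p * pd j (pd 3 k) p)
          - (pd j (pd 3 h) p * pd 4 k p + pd 3 h p * pd j (pd 4 k) p))
      + -(2 * (Pi.single j (1:ℝ) : Fin 6 → ℝ) 4) * (pd 5 h p * pd 3 k p - pd 3 h p * pd 5 k p)
      + -(2 * p 4) * ((pd j (pd 5 h) p * pd 3 k p + pd 5 h p * pd j (pd 3 k) p)
          - (pd j (pd 3 h) p * pd 5 k p + pd 3 h p * pd j (pd 5 k) p))
      + 3 * (2 * p 3 * (Pi.single j (1:ℝ) : Fin 6 → ℝ) 3 - (Pi.single j (1:ℝ) : Fin 6 → ℝ) 0)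
          * (pd 5 h p * pd 4 k p - pd 4 h p * pd 5 k p)
      + 3 * ((p 3) ^ 2 - p 0) * ((pd j (pd 5 h) p * pd 4 k p + pd 5 h p * pd j (pd 4 k) p)
          - (pd j (pd 4 h) p * pd 5 k p + pd 4 h p * pd j (pd 5 k) p)) := by
  have hbr : bracket h k = fun q =>
      -(2 * q 5) * (pd 4 h q * pd 3 k q - pd 3 h q * pd 4 k q)
      + -(2 * q 4) * (pd 5 h q * pd 3 k q - pd 3 h q * pd 5 k q)
      + 3 * ((q 3) ^ 2 - q 0) * (pd 5 h q * pd 4 k q - pd 4 h q * pd 5 k q) :=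
    funext (bracket_eq h k)
  have dA : DifferentiableAt ℝ (fun q => pd 4 h q * pd 3 k q - pd 3 h q * pd 4 k q) p :=
    ((diff_pd hh 4 p).mul (diff_pd hk 3 p)).sub ((diff_pd hh 3 p).mul (diff_pd hk 4 p))
  have dB : DifferentiableAt ℝ (fun q => pd 5 h q * pd 3 k q - pd 3 h q * pd 5 k q) p :=
    ((diff_pd hh 5 p).mul (diff_pd hk 3 p)).sub ((diff_pd hh 3 p).mul (diff_pd hk 5 p))
  have dC : DifferentiableAt ℝ (fun q => pd 5 h q * pd 4 k q - pd 4 h q * pd 5 k q) p :=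
    ((diff_pd hh 5 p).mul (diff_pd hk 4 p)).sub ((diff_pd hh 4 p).mul (diff_pd hk 5 p))
  have dc1 : DifferentiableAt ℝ (fun q : Fin 6 → ℝ => -(2 * q 5)) p :=
    ((diff_coord 5 p).const_mul 2).neg
  have dc2 : DifferentiableAt ℝ (fun q : Fin 6 → ℝ => -(2 * q 4)) p :=
    ((diff_coord 4 p).const_mul 2).neg
  have dc3 : DifferentiableAt ℝ (fun q : Fin 6 → ℝ => 3 * ((q 3) ^ 2 - q 0)) p := by
    have h1 : DifferentiableAt ℝ (fun q : Fin 6 → ℝ => (q 3) ^ 2) p := (diff_coord 3 p).pow 2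
    exact ((h1.sub (diff_coord 0 p)).const_mul 3)
  have hc1 : pd j (fun q : Fin 6 → ℝ => -(2 * q 5)) p
      = -(2 * (Pi.single j (1:ℝ) : Fin 6 → ℝ) 5) := by
    have e : (fun q : Fin 6 → ℝ => -(2 * q 5)) = fun q => (-2 : ℝ) * q 5 := by
      funext q; ring
    rw [e, pd_const_mul j (-2) (diff_coord 5 p), pd_coord]; ring
  have hc2 : pd j (fun q : Fin 6 → ℝ => -(2 * q 4)) p
      = -(2 * (Pi.single j (1:ℝ) : Fin 6 → ℝ) 4) := by
    have e : (fun q : Fin 6 → ℝ => -(2 * q 4)) = fun q => (-2 : ℝ) * q 4 := by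
      funext q; ring
    rw [e, pd_const_mul j (-2) (diff_coord 4 p), pd_coord]; ring
  have hc3 : pd j (fun q : Fin 6 → ℝ => 3 * ((q 3) ^ 2 - q 0)) p
      = 3 * (2 * p 3 * (Pi.single j (1:ℝ) : Fin 6 → ℝ) 3
          - (Pi.single j (1:ℝ) : Fin 6 → ℝ) 0) := by
    have e : (fun q : Fin 6 → ℝ => 3 * ((q 3) ^ 2 - q 0))
        = fun q => (3 : ℝ) * (q 3 * q 3 - q 0) := by funext q; ring
    rw [e, pd_const_mul j 3 ((((diff_coord 3 p).fun_mul (diff_coord 3 p))).fun_sub (diff_coord 0 p)),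
      pd_sub j ((diff_coord 3 p).fun_mul (diff_coord 3 p)) (diff_coord 0 p),
      pd_mul j (diff_coord 3 p) (diff_coord 3 p), pd_coord, pd_coord]
    ring
  have hA : pd j (fun q => pd 4 h q * pd 3 k q - pd 3 h q * pd 4 k q) p
      = (pd j (pd 4 h) p * pd 3 k p + pd 4 h p * pd j (pd 3 k) p)
        - (pd j (pd 3 h) p * pd 4 k p + pd 3 h p * pd j (pd 4 k) p) := by
    rw [pd_sub j ((diff_pd hh 4 p).fun_mul (diff_pd hk 3 p)) ((diff_pd hh 3 p).fun_mul (diff_pd hk 4 p)),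
      pd_mul j (diff_pd hh 4 p) (diff_pd hk 3 p), pd_mul j (diff_pd hh 3 p) (diff_pd hk 4 p)]
  have hB : pd j (fun q => pd 5 h q * pd 3 k q - pd 3 h q * pd 5 k q) p
      = (pd j (pd 5 h) p * pd 3 k p + pd 5 h p * pd j (pd 3 k) p)
        - (pd j (pd 3 h) p * pd 5 k p + pd 3 h p * pd j (pd 5 k) p) := by
    rw [pd_sub j ((diff_pd hh 5 p).fun_mul (diff_pd hk 3 p)) ((diff_pd hh 3 p).fun_mul (diff_pd hk 5 p)),
      pd_mul j (diff_pd hh 5 p) (diff_pd hk 3 p), pd_mul j (diff_pd hh 3 p) (diff_pd hk 5 p)]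
  have hC : pd j (fun q => pd 5 h q * pd 4 k q - pd 4 h q * pd 5 k q) p
      = (pd j (pd 5 h) p * pd 4 k p + pd 5 h p * pd j (pd 4 k) p)
        - (pd j (pd 4 h) p * pd 5 k p + pd 4 h p * pd j (pd 5 k) p) := by
    rw [pd_sub j ((diff_pd hh 5 p).fun_mul (diff_pd hk 4 p)) ((diff_pd hh 4 p).fun_mul (diff_pd hk 5 p)),
      pd_mul j (diff_pd hh 5 p) (diff_pd hk 4 p), pd_mul j (diff_pd hh 4 p) (diff_pd hk 5 p)]
  rw [hbr]
  rw [pd_add j ((dc1.fun_mul dA).fun_add (dc2.fun_mul dB)) (dc3.fun_mul dC),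
    pd_add j (dc1.fun_mul dA) (dc2.fun_mul dB),
    pd_mul j dc1 dA, pd_mul j dc2 dB, pd_mul j dc3 dC,
    hc1, hc2, hc3, hA, hB, hC]
  ring


set_option maxHeartbeats 4000000 in
/-- The bivector satisfies the Jacobi identity, i.e. it is Poisson. -/
theorem cusp_bivector_is_poisson :
    ∀ g h k : (Fin 6 → ℝ) → ℝ, ContDiff ℝ (⊤ : ℕ∞) g → ContDiff ℝ (⊤ : ℕ∞) h → ContDiff ℝ (⊤ : ℕ∞) k →
    ∀ p : Fin 6 → ℝ,
      bracket g (bracket h k) p + bracket h (bracket k g) p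
        + bracket k (bracket g h) p = 0 := by

  intro g h k hg hh hk p
  rw [bracket_eq g (bracket h k) p, bracket_eq h (bracket k g) p, bracket_eq k (bracket g h) p,
    pd_bracket 3 hh hk p, pd_bracket 4 hh hk p, pd_bracket 5 hh hk p,
    pd_bracket 3 hk hg p, pd_bracket 4 hk hg p, pd_bracket 5 hk hg p,
    pd_bracket 3 hg hh p, pd_bracket 4 hg hh p, pd_bracket 5 hg hh p]
  simp only [Pi.single_apply, Fin.reduceEq, if_true, if_false, reduceIte]
  rw [pd_symm hg 4 3 p, pd_symm hg 5 3 p, pd_symm hg 5 4 p,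
    pd_symm hh 4 3 p, pd_symm hh 5 3 p, pd_symm hh 5 4 p,
    pd_symm hk 4 3 p, pd_symm hk 5 3 p, pd_symm hk 5 4 p]
  ring
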